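/- Let (X, Y) be a complete hereditary cotorsion pair in an abelian category A. For any finite family M_1, …, M_n of objects, X-resdim(M_1 ⊕ ⋯ ⊕ M_n) = sup{ X-resdim(M_i) : i = 1, …, n }. Consequently, the class of objects of finite X-resolution dimension is thick (closed under direct summands, extensions, kernels of epimorphisms, and cokernels of monomorphisms). -/

import Mathlib

open CategoryTheory Limits

universe w v u

namespace PaperAB

variable {C : Type u} [Category.{v} C] [Abelian C] [HasExt.{w} C]

/-- Vanishing of `Ext^n(A, B)`. -/
def extZero (A B : C) (n : ℕ) : Prop := Subsingleton (Abelian.Ext A B n)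

/-- The right `Ext^1`-orthogonal class of a class `𝒳`. -/
def rightOrth (𝒳 : C → Prop) : C → Prop := fun B => ∀ A, 𝒳 A → extZero A B 1

/-- The left `Ext^1`-orthogonal class of a class `𝒴`. -/
def leftOrth (𝒴 : C → Prop) : C → Prop := fun A => ∀ B, 𝒴 B → extZero A B 1

/-- `f, g` form a short exact sequence `0 → A → B → D → 0`. -/
def IsSES {A B D : C} (f : A ⟶ B) (g : B ⟶ D) : Prop :=
  ∃ (zero : f ≫ g = 0), (ShortComplex.mk f g zero).ShortExact

/-- `(𝒳, 𝒴)` is a cotorsion pair. -/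
structure CotorsionPair (𝒳 𝒴 : C → Prop) : Prop where
  eqLeft : ∀ A, 𝒳 A ↔ leftOrth 𝒴 A
  eqRight : ∀ B, 𝒴 B ↔ rightOrth 𝒳 B

/-- Completeness of a pair of classes `(𝒳, 𝒴)`: every object admits a special
`𝒳`-precover and a special `𝒴`-preenvelope. -/
def Complete (𝒳 𝒴 : C → Prop) : Prop :=
  ∀ A : C,
    (∃ (Y X : C) (f : Y ⟶ X) (g : X ⟶ A), IsSES f g ∧ 𝒳 X ∧ 𝒴 Y) ∧
    (∃ (Y X : C) (f : A ⟶ Y) (g : Y ⟶ X), IsSES f g ∧ 𝒴 Y ∧ 𝒳 X)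

/-- Heredity: `Ext^n(𝒳, 𝒴) = 0` for all `n ≥ 1`. -/
def Hereditary (𝒳 𝒴 : C → Prop) : Prop :=
  ∀ A B, 𝒳 A → 𝒴 B → ∀ n, 1 ≤ n → extZero A B n

/-- Complete hereditary cotorsion pair. -/
structure CHCP (𝒳 𝒴 : C → Prop) : Prop where
  cotorsion : CotorsionPair 𝒳 𝒴
  complete : Complete 𝒳 𝒴
  hereditary : Hereditary 𝒳 𝒴

/-- `ResDimLE 𝒳 A n` : there exists an exact sequence
`0 → X n → ⋯ → X 0 → A → 0` with all `X i ∈ 𝒳`. -/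
def ResDimLE (𝒳 : C → Prop) (A : C) (n : ℕ) : Prop :=
  ∃ (X : ℕ → C) (d : ∀ i, X (i + 1) ⟶ X i) (ε : X 0 ⟶ A),
    (∀ i, i ≤ n → 𝒳 (X i)) ∧ (∀ i, n < i → IsZero (X i)) ∧ Epi ε ∧
    (∃ (zero : d 0 ≫ ε = 0), (ShortComplex.mk (d 0) ε zero).Exact) ∧
    (∀ i, ∃ (zero : d (i + 1) ≫ d i = 0),
      (ShortComplex.mk (d (i + 1)) (d i) zero).Exact)

/-- Objects of finite `𝒳`-resolution dimension (the class `X̂`). -/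
def FinResDim (𝒳 : C → Prop) (A : C) : Prop := ∃ n, ResDimLE 𝒳 A n

/-- The `𝒳`-resolution dimension of `A`, in `ℕ∞`. -/
noncomputable def ResDim (𝒳 : C → Prop) (A : C) : ℕ∞ :=
  sInf {m : ℕ∞ | ∃ n : ℕ, m = (n : ℕ∞) ∧ ResDimLE 𝒳 A n}

/-- The intersection of two classes. -/
def Inter (𝒳 𝒴 : C → Prop) : C → Prop := fun A => 𝒳 A ∧ 𝒴 A

def ClosedUnderExtensions (𝒲 : C → Prop) : Prop :=
  ∀ ⦃A B D : C⦄ (f : A ⟶ B) (g : B ⟶ D), IsSES f g → 𝒲 A → 𝒲 D → 𝒲 B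

def ClosedUnderKernels (𝒲 : C → Prop) : Prop :=
  ∀ ⦃A B D : C⦄ (f : A ⟶ B) (g : B ⟶ D), IsSES f g → 𝒲 B → 𝒲 D → 𝒲 A

def ClosedUnderCokernels (𝒲 : C → Prop) : Prop :=
  ∀ ⦃A B D : C⦄ (f : A ⟶ B) (g : B ⟶ D), IsSES f g → 𝒲 A → 𝒲 B → 𝒲 D

def ClosedUnderSummands (𝒲 : C → Prop) : Prop :=
  ∀ ⦃A B : C⦄ (i : A ⟶ B) (p : B ⟶ A), i ≫ p = 𝟙 A → 𝒲 B → 𝒲 A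

/-- A class is thick if it is closed under direct summands and has the
two-out-of-three property on short exact sequences. -/
def IsThick (𝒲 : C → Prop) : Prop :=
  ClosedUnderSummands 𝒲 ∧ ClosedUnderExtensions 𝒲 ∧
    ClosedUnderKernels 𝒲 ∧ ClosedUnderCokernels 𝒲

/-- A class is left thick if it is closed under direct summands, extensions and
kernels of epimorphisms. -/
def LeftThick (𝒲 : C → Prop) : Prop :=
  ClosedUnderSummands 𝒲 ∧ ClosedUnderExtensions 𝒲 ∧ ClosedUnderKernels 𝒲

/-- A class is right thick if it is closed under direct summands, extensions and
cokernels of monomorphisms. -/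
def RightThick (𝒲 : C → Prop) : Prop :=
  ClosedUnderSummands 𝒲 ∧ ClosedUnderExtensions 𝒲 ∧ ClosedUnderCokernels 𝒲

/-- `ω` is a cogenerator for `𝒳`. -/
def IsCogeneratorFor (ω 𝒳 : C → Prop) : Prop :=
  (∀ A, ω A → 𝒳 A) ∧
  ∀ A, 𝒳 A → ∃ (W A' : C) (f : A ⟶ W) (g : W ⟶ A'), IsSES f g ∧ ω W ∧ 𝒳 A'

/-- `ω` is an injective cogenerator for `𝒳`. -/
def IsInjCogeneratorFor (ω 𝒳 : C → Prop) : Prop :=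
  IsCogeneratorFor ω 𝒳 ∧ ∀ A W, 𝒳 A → ω W → ∀ n, 1 ≤ n → extZero A W n

/-- A left weak Auslander–Buchweitz context `(𝒳, 𝒴, ω)`. -/
structure LeftWeakABContext (𝒳 𝒴 ω : C → Prop) : Prop where
  ab1 : LeftThick 𝒳
  ab2 : RightThick 𝒴
  ab2' : ∀ A, 𝒴 A → FinResDim 𝒳 A
  ab3 : (∀ A, ω A ↔ 𝒳 A ∧ 𝒴 A) ∧ IsInjCogeneratorFor ω 𝒳

/-- A left Auslander–Buchweitz context: a left weak AB-context in which every
object has finite `𝒳`-resolution dimension. -/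
structure LeftABContext (𝒳 𝒴 ω : C → Prop) extends LeftWeakABContext 𝒳 𝒴 ω : Prop where
  hat_all : ∀ A : C, FinResDim 𝒳 A

end PaperAB

/-!
For a complete hereditary cotorsion pair `(𝒳, 𝒴)`, the `𝒳`-resolution dimension of `A` is at
most `n` exactly when `Ext^m(A, Y) = 0` for all `m > n` and `Y ∈ 𝒴`. One direction is dimension
shifting along a resolution, using heredity; for the other, a special `𝒳`-precover
`0 → K → X → A → 0` lowers the vanishing bound by one for `K`, and at the bottom the cotorsion
pair puts an object with `Ext^{≥1}(-, 𝒴) = 0` into `𝒳`. Both claims then follow from the long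
exact `Ext` sequence and the additivity of `Ext` in its first variable.
-/

lemma ENat.eq_of_forall_le_natCast_iff {a b : ℕ∞} (h : ∀ n : ℕ, a ≤ n ↔ b ≤ n) : a = b :=
  WithTop.eq_of_forall_le_coe_iff h

namespace PaperAB

open Abelian ZeroObject

variable {C : Type u} [Category.{v} C] [Abelian C]

section ExtVanishing

variable [HasExt.{w} C]

lemma extZero_of_forall_eq_zero {A B : C} {n : ℕ} (h : ∀ x : Ext A B n, x = 0) :
    extZero A B n :=
  subsingleton_of_forall_eq 0 h

lemma extZero.eq_zero {A B : C} {n : ℕ} (h : extZero A B n) (x : Ext A B n) : x = 0 :=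
  @Subsingleton.elim _ h x 0

lemma extZero_of_retract {A B W : C} (i : A ⟶ B) (p : B ⟶ A) (hip : i ≫ p = 𝟙 A) {n : ℕ}
    (h : extZero B W n) : extZero A W n := by
  have hinv : Function.LeftInverse (fun y : Ext B W n => (Ext.mk₀ i).comp y (zero_add n))
      (fun x : Ext A W n => (Ext.mk₀ p).comp x (zero_add n)) := fun x => by
    simp only [Ext.mk₀_comp_mk₀_assoc, hip, Ext.mk₀_id_comp]
  exact @Function.Injective.subsingleton _ _ _ hinv.injective h

lemma extZero_biproduct_iff {J : Type*} [Fintype J] (M : J → C) [HasBiproduct M] (W : C)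
    (n : ℕ) : extZero (⨁ M) W n ↔ ∀ j, extZero (M j) W n := by
  refine ⟨fun h j => extZero_of_retract _ _ (biproduct.ι_π_self M j) h, fun h => ?_⟩
  have : ∀ j, Subsingleton (Ext (M j) W n) := h
  exact (Ext.biproductAddEquiv (biproduct.isBilimit M) W n).injective.subsingleton

variable {S : ShortComplex C} (hS : S.ShortExact) {W : C}
include hS

lemma extZero_X₂_of_shortExact {n : ℕ} (h₁ : extZero S.X₁ W n) (h₃ : extZero S.X₃ W n) :
    extZero S.X₂ W n := by
  refine extZero_of_forall_eq_zero fun x => ?_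
  obtain ⟨y, rfl⟩ := Ext.contravariant_sequence_exact₂ hS W x (h₁.eq_zero _)
  rw [h₃.eq_zero y, Ext.comp_zero]

lemma extZero_X₁_of_shortExact {n : ℕ} (h₂ : extZero S.X₂ W n) (h₃ : extZero S.X₃ W (n + 1)) :
    extZero S.X₁ W n := by
  refine extZero_of_forall_eq_zero fun x => ?_
  obtain ⟨y, rfl⟩ :=
    Ext.contravariant_sequence_exact₁ hS W x (add_comm 1 n) (h₃.eq_zero _)
  rw [h₂.eq_zero y, Ext.comp_zero]

lemma extZero_X₃_of_shortExact {n : ℕ} (h₁ : extZero S.X₁ W n) (h₂ : extZero S.X₂ W (n + 1)) :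
    extZero S.X₃ W (n + 1) := by
  refine extZero_of_forall_eq_zero fun x => ?_
  obtain ⟨y, rfl⟩ :=
    Ext.contravariant_sequence_exact₃ hS W x (h₂.eq_zero _) (add_comm 1 n)
  rw [h₁.eq_zero y, Ext.comp_zero]

end ExtVanishing

section ExtVanishesAbove

variable [HasExt.{w} C] {𝒴 : C → Prop}

def ExtVanishesAbove (𝒴 : C → Prop) (A : C) (n : ℕ) : Prop :=
  ∀ B, 𝒴 B → ∀ m, n < m → extZero A B m

lemma ExtVanishesAbove.mono {A : C} {n n' : ℕ} (h : ExtVanishesAbove 𝒴 A n) (hnn' : n ≤ n') :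
    ExtVanishesAbove 𝒴 A n' :=
  fun B hB m hm => h B hB m (hnn'.trans_lt hm)

lemma ExtVanishesAbove.of_retract {A A' : C} {n : ℕ} (h : ExtVanishesAbove 𝒴 A' n)
    (i : A ⟶ A') (p : A' ⟶ A) (hip : i ≫ p = 𝟙 A) : ExtVanishesAbove 𝒴 A n :=
  fun B hB m hm => extZero_of_retract i p hip (h B hB m hm)

lemma extVanishesAbove_biproduct_iff {J : Type*} [Fintype J] (M : J → C) [HasBiproduct M]
    {n : ℕ} : ExtVanishesAbove 𝒴 (⨁ M) n ↔ ∀ j, ExtVanishesAbove 𝒴 (M j) n := by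
  simp only [ExtVanishesAbove, extZero_biproduct_iff]
  exact ⟨fun h j B hB m hm => h B hB m hm j, fun h B hB m hm j => h j B hB m hm⟩

variable {S : ShortComplex C} (hS : S.ShortExact) {n : ℕ}
include hS

lemma extVanishesAbove_X₂_of_shortExact (h₁ : ExtVanishesAbove 𝒴 S.X₁ n)
    (h₃ : ExtVanishesAbove 𝒴 S.X₃ n) : ExtVanishesAbove 𝒴 S.X₂ n :=
  fun B hB m hm => extZero_X₂_of_shortExact hS (h₁ B hB m hm) (h₃ B hB m hm)

lemma extVanishesAbove_X₁_of_shortExact (h₂ : ExtVanishesAbove 𝒴 S.X₂ n)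
    (h₃ : ExtVanishesAbove 𝒴 S.X₃ (n + 1)) : ExtVanishesAbove 𝒴 S.X₁ n :=
  fun B hB m hm => extZero_X₁_of_shortExact hS (h₂ B hB m hm) (h₃ B hB (m + 1) (by omega))

lemma extVanishesAbove_X₃_of_shortExact (h₁ : ExtVanishesAbove 𝒴 S.X₁ n)
    (h₂ : ExtVanishesAbove 𝒴 S.X₂ (n + 1)) : ExtVanishesAbove 𝒴 S.X₃ (n + 1) := by
  rintro B hB (_ | m) hm
  · omega
  · exact extZero_X₃_of_shortExact hS (h₁ B hB m (by omega)) (h₂ B hB (m + 1) hm)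

omit hS

lemma isThick_exists_extVanishesAbove (𝒴 : C → Prop) :
    IsThick fun A => ∃ n, ExtVanishesAbove 𝒴 A n := by
  refine ⟨?_, ?_, ?_, ?_⟩
  · rintro A A' i p hip ⟨n, h⟩
    exact ⟨n, h.of_retract i p hip⟩
  · rintro A B D f g ⟨_, hS⟩ ⟨n₁, h₁⟩ ⟨n₃, h₃⟩
    exact ⟨max n₁ n₃, extVanishesAbove_X₂_of_shortExact hS (h₁.mono (le_max_left _ _))
      (h₃.mono (le_max_right _ _))⟩
  · rintro A B D f g ⟨_, hS⟩ ⟨n₂, h₂⟩ ⟨n₃, h₃⟩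
    exact ⟨max n₂ n₃, extVanishesAbove_X₁_of_shortExact hS (h₂.mono (le_max_left _ _))
      (h₃.mono ((le_max_right _ _).trans (Nat.le_succ _)))⟩
  · rintro A B D f g ⟨_, hS⟩ ⟨n₁, h₁⟩ ⟨n₂, h₂⟩
    exact ⟨max n₁ n₂ + 1, extVanishesAbove_X₃_of_shortExact hS (h₁.mono (le_max_left _ _))
      (h₂.mono ((le_max_right _ _).trans (Nat.le_succ _)))⟩

end ExtVanishesAbove

section Resolutions

variable {𝒳 : C → Prop}

lemma resDimLE_zero_of_mem {A : C} (hA : 𝒳 A) : ResDimLE 𝒳 A 0 := by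
  refine ⟨fun | 0 => A | _ + 1 => 0, fun _ => 0, 𝟙 A, ?_, ?_, inferInstance,
    ⟨by simp, (ShortComplex.exact_iff_mono _ rfl).mpr inferInstance⟩,
    fun _ => ⟨by simp, ShortComplex.exact_of_isZero_X₂ _ (isZero_zero C)⟩⟩
  · rintro _ ⟨⟩
    exact hA
  · rintro (_ | _) hi
    exacts [absurd hi (lt_irrefl 0), isZero_zero C]

lemma ResDimLE.exists_isIso_of_zero {A : C} (h : ResDimLE 𝒳 A 0) :
    ∃ (X : C) (e : X ⟶ A), IsIso e ∧ 𝒳 X := by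
  obtain ⟨X, d, ε, hX, hzero, _, ⟨_, hexact⟩, _⟩ := h
  have : Mono ε := (ShortComplex.exact_iff_mono _ ((hzero 1 one_pos).eq_of_src _ _)).mp hexact
  exact ⟨X 0, ε, isIso_of_mono_of_epi ε, hX 0 le_rfl⟩

lemma ResDimLE.exists_shortExact {A : C} {n : ℕ} (h : ResDimLE 𝒳 A (n + 1)) :
    ∃ (K X : C) (f : K ⟶ X) (g : X ⟶ A), IsSES f g ∧ 𝒳 X ∧ ResDimLE 𝒳 K n := by
  obtain ⟨X, d, ε, hX, hzero, _, ⟨hcomp, hexact⟩, hexact'⟩ := h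
  let ε' : X 1 ⟶ kernel ε := kernel.lift ε (d 0) hcomp
  have : Epi ε' := (ShortComplex.exact_iff_epi_kernel_lift _).mp hexact
  obtain ⟨hcomp₁, hexact₁⟩ := hexact' 0
  have hcomp₁' : d 1 ≫ ε' = 0 := by
    rw [← cancel_mono (kernel.ι ε), Category.assoc, kernel.lift_ι, hcomp₁, zero_comp]
  have hexact₁' : (ShortComplex.mk (d 1) ε' hcomp₁').Exact :=
    (ShortComplex.exact_iff_of_epi_of_isIso_of_mono
      (S₁ := ShortComplex.mk (d 1) ε' hcomp₁') (S₂ := ShortComplex.mk (d 1) (d 0) hcomp₁)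
      { τ₁ := 𝟙 _, τ₂ := 𝟙 _, τ₃ := kernel.ι ε }).mpr hexact₁
  refine ⟨kernel ε, X 0, kernel.ι ε, ε, ⟨kernel.condition ε, ⟨ShortComplex.exact_kernel ε⟩⟩,
    hX 0 (Nat.zero_le _), fun i => X (i + 1), fun i => d (i + 1), ε', fun i hi => hX _ (by omega),
    fun i hi => hzero _ (by omega), inferInstance, ⟨hcomp₁', hexact₁'⟩, fun i => hexact' (i + 1)⟩

lemma ResDimLE.of_shortExact {K X A : C} {f : K ⟶ X} {g : X ⟶ A} (hfg : IsSES f g)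
    (hX : 𝒳 X) {n : ℕ} (hK : ResDimLE 𝒳 K n) : ResDimLE 𝒳 A (n + 1) := by
  obtain ⟨hfg, hS⟩ := hfg
  obtain ⟨Y, d, ε, hY, hzero, _, ⟨hcomp, hexact⟩, hexact'⟩ := hK
  have := hS.mono_f
  have hcomp' : d 0 ≫ ε ≫ f = 0 := by rw [reassoc_of% hcomp, zero_comp]
  have hcomp₀ : (ε ≫ f) ≫ g = 0 := by rw [Category.assoc, hfg, comp_zero]
  have hexact₀ : (ShortComplex.mk (ε ≫ f) g hcomp₀).Exact :=
    (ShortComplex.exact_iff_of_epi_of_isIso_of_mono (S₁ := ShortComplex.mk (ε ≫ f) g hcomp₀)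
      (S₂ := ShortComplex.mk f g hfg)
      { τ₁ := ε, τ₂ := 𝟙 _, τ₃ := 𝟙 _ }).mpr hS.exact
  have hexact₁ : (ShortComplex.mk (d 0) (ε ≫ f) hcomp').Exact :=
    (ShortComplex.exact_iff_of_epi_of_isIso_of_mono (S₁ := ShortComplex.mk (d 0) ε hcomp)
      (S₂ := ShortComplex.mk (d 0) (ε ≫ f) hcomp')
      { τ₁ := 𝟙 _, τ₂ := 𝟙 _, τ₃ := f }).mp hexact
  refine ⟨fun | 0 => X | i + 1 => Y i, fun | 0 => ε ≫ f | i + 1 => d i, g, ?_, ?_, hS.epi_g,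
    ⟨hcomp₀, hexact₀⟩, fun | 0 => ⟨hcomp', hexact₁⟩ | i + 1 => hexact' i⟩
  · rintro (_ | i) hi
    exacts [hX, hY i (by omega)]
  · rintro (_ | i) hi
    exacts [absurd hi (Nat.not_lt_zero _), hzero i (by omega)]

lemma resDim_le_natCast_iff {A : C} {n : ℕ} : ResDim 𝒳 A ≤ n ↔ ∃ m ≤ n, ResDimLE 𝒳 A m := by
  constructor
  · intro hle
    by_contra! hc
    have : ((n + 1 : ℕ) : ℕ∞) ≤ ResDim 𝒳 A :=
      le_sInf fun _ ⟨m, hm, hres⟩ => hm ▸ Nat.cast_le.mpr (not_le.mp fun hmn => hc m hmn hres)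
    exact absurd (this.trans hle) (by norm_cast; omega)
  · rintro ⟨m, hmn, hres⟩
    exact (Nat.cast_le.mpr hmn).trans' (sInf_le ⟨m, rfl, hres⟩)

end Resolutions

section CotorsionPair

variable [HasExt.{w} C] {𝒳 𝒴 : C → Prop}

lemma Hereditary.extVanishesAbove_zero (h : Hereditary 𝒳 𝒴) {X : C} (hX : 𝒳 X) :
    ExtVanishesAbove 𝒴 X 0 :=
  fun B hB m hm => h X B hX hB m hm

lemma CotorsionPair.mem_left_of_extVanishesAbove_zero (h : CotorsionPair 𝒳 𝒴) {A : C}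
    (hA : ExtVanishesAbove 𝒴 A 0) : 𝒳 A :=
  (h.eqLeft A).mpr fun B hB => hA B hB 1 one_pos

theorem resDimLE_iff_extVanishesAbove (h : CHCP 𝒳 𝒴) {A : C} {n : ℕ} :
    ResDimLE 𝒳 A n ↔ ExtVanishesAbove 𝒴 A n := by
  induction n generalizing A with
  | zero =>
    refine ⟨fun hA => ?_, fun hA =>
      resDimLE_zero_of_mem (h.cotorsion.mem_left_of_extVanishesAbove_zero hA)⟩
    obtain ⟨X, e, _, hX⟩ := hA.exists_isIso_of_zero
    exact (h.hereditary.extVanishesAbove_zero hX).of_retract (inv e) e (by simp)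
  | succ n ih =>
    constructor
    · intro hA
      obtain ⟨K, X, f, g, ⟨_, hS⟩, hX, hK⟩ := hA.exists_shortExact
      exact extVanishesAbove_X₃_of_shortExact hS (ih.mp hK)
        ((h.hereditary.extVanishesAbove_zero hX).mono (Nat.zero_le _))
    · intro hA
      obtain ⟨⟨K, X, f, g, hfg, hX, hK⟩, -⟩ := h.complete A
      exact ResDimLE.of_shortExact hfg hX (ih.mpr (extVanishesAbove_X₁_of_shortExact hfg.2
        ((h.hereditary.extVanishesAbove_zero hX).mono (Nat.zero_le _)) hA))

theorem resDim_le_natCast_iff_extVanishesAbove (h : CHCP 𝒳 𝒴) {A : C} {n : ℕ} :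
    ResDim 𝒳 A ≤ n ↔ ExtVanishesAbove 𝒴 A n := by
  simp only [resDim_le_natCast_iff, resDimLE_iff_extVanishesAbove h]
  exact ⟨fun ⟨m, hmn, hm⟩ => hm.mono hmn, fun hn => ⟨n, le_rfl, hn⟩⟩

theorem finResDim_eq (h : CHCP 𝒳 𝒴) : FinResDim 𝒳 = fun A => ∃ n, ExtVanishesAbove 𝒴 A n :=
  funext fun _ => propext (exists_congr fun _ => resDimLE_iff_extVanishesAbove h)

end CotorsionPair

/-- For a complete hereditary cotorsion pair `(𝒳, 𝒴)`, the
`𝒳`-resolution dimension of a finite direct sum is the supremum of the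
`𝒳`-resolution dimensions; consequently the class of objects of finite
`𝒳`-resolution dimension is thick. -/
theorem statement3 {C : Type u} [Category.{v} C] [Abelian C] [HasExt.{w} C]
    {𝒳 𝒴 : C → Prop} (h : CHCP 𝒳 𝒴) (k : ℕ) (M : Fin k → C)
    [HasBiproduct M] :
    (ResDim 𝒳 (⨁ M) = ⨆ i, ResDim 𝒳 (M i)) ∧ IsThick (FinResDim 𝒳) := by
  refine ⟨ENat.eq_of_forall_le_natCast_iff fun n => ?_, ?_⟩
  · simp only [iSup_le_iff, resDim_le_natCast_iff_extVanishesAbove h,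
      extVanishesAbove_biproduct_iff]
  · rw [finResDim_eq h]
    exact isThick_exists_extVanishesAbove 𝒴

end PaperAB
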